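/- Let q be a prime power and k ≥ 3. The set of Bluher values in F_{q^k} (i.e., the set of B ∈ F_{q^k}^× such that X^{q+1} - B·X + B splits completely over F_{q^k}) equals the set { (u - u^{q^2})^{q+1} / (u - u^q)^{q^2+1} : u ∈ F_{q^k} \ F_{q^2} }. -/

import Mathlib

open Polynomial Function

/-!
Let `σ x = x ^ q`, `a = σ u - u` and `b = a + σ a = σ (σ u) - u`, so that the claimed value is
`B(u) = σ b * b / (σ (σ a) * a)`. For every nonzero root `g` of the linearized polynomial
`a X^(q²) - b X^q + σ a X`, the element `y = b * σ g / (σ a * g)` satisfies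
`σ y * y = B(u) * (y - 1)`, i.e. it is a root of `X^(q+1) - B(u) X + B(u)`. That linearized
polynomial vanishes on the `F_q`-span of `1` and `u`; the representatives `1` and `u + c`,
`c ∈ F_q`, of the `q + 1` points of its projectivisation give `q + 1` distinct roots `y` as soon
as `u ∉ F_{q²}`, so the polynomial splits.

Conversely, the polynomial is separable, so if it splits it has three distinct roots `x, y, z`.
Then `u = (x - y) / (x - z)` satisfies `σ u * y = u * z` and `σ (σ u) * (y - 1) = u * (z - 1)`,
hence `u ∉ F_{q²}` and `y = b / σ a`, which is the root attached to `g = 1`; comparing the two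
equations for `y` gives `B = B(u)`.
-/

theorem Polynomial.splits_of_natDegree_le_card {F ι : Type*} [Field F] [Finite ι] {f : F[X]}
    (hf : f ≠ 0) {r : ι → F} (hr : Injective r) (hroot : ∀ i, f.IsRoot (r i))
    (hdeg : f.natDegree ≤ Nat.card ι) : f.Splits := by
  classical
  have := Fintype.ofFinite ι
  refine splits_iff_card_roots.mpr (le_antisymm (card_roots' f) (hdeg.trans ?_))
  calc Nat.card ι = (Finset.univ.image r).card := by
        rw [Finset.card_image_of_injective _ hr, Finset.card_univ, Nat.card_eq_fintype_card]
    _ ≤ f.roots.toFinset.card := Finset.card_le_card fun x hx => by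
        obtain ⟨i, -, rfl⟩ := Finset.mem_image.mp hx
        exact Multiset.mem_toFinset.mpr ((mem_roots hf).mpr (hroot i))
    _ ≤ Multiset.card f.roots := Multiset.toFinset_card_le _

section FieldEndomorphism

variable {F : Type*} [Field F] (σ : F →+* F)

def bluherValue (a : F) : F := σ (a + σ a) * (a + σ a) / (σ (σ a) * a)

def bluherRoot (a g : F) : F := (a + σ a) * σ g / (σ a * g)

variable {σ}

theorem map_bluherRoot_mul_self {a g : F} (ha : a ≠ 0) (hg : g ≠ 0)
    (hker : a * σ (σ g) + σ a * g = (a + σ a) * σ g) :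
    σ (bluherRoot σ a g) * bluherRoot σ a g = bluherValue σ a * (bluherRoot σ a g - 1) := by
  have hσa : σ a ≠ 0 := (map_ne_zero σ).mpr ha
  have hσσa : σ (σ a) ≠ 0 := (map_ne_zero σ).mpr hσa
  have hσg : σ g ≠ 0 := (map_ne_zero σ).mpr hg
  have hy1 : bluherRoot σ a g - 1 = a * σ (σ g) / (σ a * g) := by
    rw [bluherRoot, div_sub_one (mul_ne_zero hσa hg)]
    congr 1
    linear_combination -hker
  rw [hy1, bluherRoot, bluherValue, map_div₀, map_mul, map_mul]
  field_simp

theorem map_ne_of_map_map_ne {u : F} (hu : σ (σ u) ≠ u) : σ u ≠ u :=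
  fun h => hu (by rw [h, h])

theorem sub_add_map_sub_ne_zero {u : F} (hu : σ (σ u) ≠ u) : σ u - u + σ (σ u - u) ≠ 0 := by
  rw [map_sub, sub_add_sub_cancel']
  exact sub_ne_zero.mpr hu

theorem bluherValue_sub_ne_zero {u : F} (hu : σ (σ u) ≠ u) : bluherValue σ (σ u - u) ≠ 0 := by
  have ha : σ u - u ≠ 0 := sub_ne_zero.mpr (map_ne_of_map_map_ne hu)
  have hb := sub_add_map_sub_ne_zero hu
  exact div_ne_zero (mul_ne_zero ((map_ne_zero σ).mpr hb) hb)
    (mul_ne_zero ((map_ne_zero σ).mpr ((map_ne_zero σ).mpr ha)) ha)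

section Solutions

variable {B s t x y z : F}

theorem ne_zero_of_solution (hB : B ≠ 0) (ht : σ t * t = B * (t - 1)) : t ≠ 0 := by
  rintro rfl; simp [hB] at ht

theorem ne_one_of_solution (ht : σ t * t = B * (t - 1)) : t ≠ 1 := by
  rintro rfl; simp at ht

theorem map_sub_mul_mul_of_solutions (hs : σ s * s = B * (s - 1))
    (ht : σ t * t = B * (t - 1)) : σ (s - t) * (s * t) = B * (s - t) := by
  rw [map_sub]; linear_combination t * hs - s * ht

theorem map_div_sub_mul_of_solutions (hB : B ≠ 0) (hxz : x ≠ z) (hx : σ x * x = B * (x - 1))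
    (hy : σ y * y = B * (y - 1)) (hz : σ z * z = B * (z - 1)) :
    σ ((x - y) / (x - z)) * y = (x - y) / (x - z) * z := by
  have hxz' := sub_ne_zero.mpr hxz
  have hσxz : σ (x - z) ≠ 0 := (map_ne_zero σ).mpr hxz'
  rw [map_div₀]
  field_simp
  apply mul_left_cancel₀ (ne_zero_of_solution hB hx)
  linear_combination (x - z) * map_sub_mul_mul_of_solutions hx hy -
    (x - y) * map_sub_mul_mul_of_solutions hx hz

theorem exists_eq_bluherValue_of_solutions (hB : B ≠ 0) (hxy : x ≠ y) (hxz : x ≠ z)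
    (hyz : y ≠ z) (hx : σ x * x = B * (x - 1)) (hy : σ y * y = B * (y - 1))
    (hz : σ z * z = B * (z - 1)) : ∃ u, σ (σ u) ≠ u ∧ B = bluherValue σ (σ u - u) := by
  obtain ⟨u, hu⟩ : ∃ u, u = (x - y) / (x - z) := ⟨_, rfl⟩
  have hu0 : u ≠ 0 := hu ▸ div_ne_zero (sub_ne_zero.mpr hxy) (sub_ne_zero.mpr hxz)
  have h1 : σ u * y = u * z := hu ▸ map_div_sub_mul_of_solutions hB hxz hx hy hz
  have h2 : σ (σ u) * (y - 1) = u * (z - 1) := by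
    have h1' : σ (σ u) * σ y = σ u * σ z := by simpa only [map_mul] using congrArg σ h1
    apply mul_left_cancel₀ hB
    linear_combination y * h1' + σ z * h1 - σ (σ u) * hy + u * hz
  have ha : σ u - u ≠ 0 := by
    intro h
    rw [sub_eq_zero.mp h] at h1
    exact hyz (mul_left_cancel₀ hu0 h1)
  refine ⟨u, fun h => hyz ?_, ?_⟩
  · rw [h] at h2
    linear_combination mul_left_cancel₀ hu0 h2
  have hy_root : y = bluherRoot σ (σ u - u) 1 := by
    rw [bluherRoot, map_one, mul_one, mul_one, eq_div_iff ((map_ne_zero σ).mpr ha), map_sub]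
    linear_combination h2 - h1
  have key := map_bluherRoot_mul_self (σ := σ) ha one_ne_zero (by simp)
  rw [← hy_root, hy] at key
  exact mul_right_cancel₀ (sub_ne_zero.mpr (ne_one_of_solution hy)) key

end Solutions

def lineRep {K : Type*} (φ : K → F) (u : F) : Option K → F
  | none => 1
  | some c => u + φ c

section lineRep

variable {K : Type*} {φ : K → F} {u : F}

theorem lineRep_ne_zero (hu : σ u ≠ u) (hφ : ∀ c, σ (φ c) = φ c) (i : Option K) :
    lineRep φ u i ≠ 0 := by
  cases i with
  | none => exact one_ne_zero
  | some c =>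
    intro h
    rw [lineRep, add_eq_zero_iff_eq_neg] at h
    exact hu (by rw [h, map_neg, hφ])

theorem lineRep_linearized_eq (hφ : ∀ c, σ (φ c) = φ c) (i : Option K) :
    (σ u - u) * σ (σ (lineRep φ u i)) + σ (σ u - u) * lineRep φ u i =
      (σ u - u + σ (σ u - u)) * σ (lineRep φ u i) := by
  cases i with
  | none => simp only [lineRep, map_one]; ring
  | some c => simp only [lineRep, map_add, map_sub, hφ]; ring

theorem map_mul_eq_of_bluherRoot_eq {a g h : F} (ha : a ≠ 0) (hb : a + σ a ≠ 0) (hg : g ≠ 0)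
    (hh : h ≠ 0) (hgh : bluherRoot σ a g = bluherRoot σ a h) : σ g * h = σ h * g := by
  have hσa : σ a ≠ 0 := (map_ne_zero σ).mpr ha
  rw [bluherRoot, bluherRoot, div_eq_div_iff (mul_ne_zero hσa hg) (mul_ne_zero hσa hh)] at hgh
  apply mul_left_cancel₀ (mul_ne_zero hb hσa)
  linear_combination hgh

theorem injective_bluherRoot_lineRep (hu : σ (σ u) ≠ u) (hφ : Injective φ)
    (hfix : ∀ c, σ (φ c) = φ c) : Injective fun i => bluherRoot σ (σ u - u) (lineRep φ u i) := by
  have hu' := map_ne_of_map_map_ne hu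
  have ha : σ u - u ≠ 0 := sub_ne_zero.mpr hu'
  have hb := sub_add_map_sub_ne_zero hu
  intro i j hij
  have key := map_mul_eq_of_bluherRoot_eq ha hb (lineRep_ne_zero hu' hfix i)
    (lineRep_ne_zero hu' hfix j) hij
  cases i with
  | none =>
    cases j with
    | none => rfl
    | some c =>
      simp only [lineRep, map_one, map_add, hfix] at key
      exact absurd (by linear_combination -key) hu'
  | some c =>
    cases j with
    | none =>
      simp only [lineRep, map_one, map_add, hfix] at key
      exact absurd (by linear_combination key) hu'
    | some d =>
      simp only [lineRep, map_add, hfix] at key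
      have : (φ d - φ c) * (σ u - u) = 0 := by linear_combination key
      rw [hφ (sub_eq_zero.mp ((mul_eq_zero.mp this).resolve_right ha)).symm]

end lineRep

end FieldEndomorphism

section BluherPolynomial

variable {F : Type*} [Field F] {q : ℕ} {B : F}

noncomputable def bluherPoly (q : ℕ) (B : F) : F[X] := X ^ (q + 1) - C B * X + C B

theorem bluherPoly_ne_zero (hB : B ≠ 0) : bluherPoly q B ≠ 0 := fun h => hB <| by
  simpa [bluherPoly] using congrArg (Polynomial.eval 0) h

theorem natDegree_bluherPoly_le : (bluherPoly q B).natDegree ≤ q + 1 := by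
  unfold bluherPoly; compute_degree

theorem natDegree_bluherPoly (hq : q ≠ 0) : (bluherPoly q B).natDegree = q + 1 := by
  unfold bluherPoly; compute_degree!
  simp [hq]

theorem separable_bluherPoly (hq : (q : F) = 0) (hB : B ≠ 0) : (bluherPoly q B).Separable := by
  have hderiv : derivative (bluherPoly q B) = X ^ q - C B := by
    simp [bluherPoly, hq]
  refine ⟨C B⁻¹, -(C B⁻¹ * X), ?_⟩
  rw [hderiv, bluherPoly]
  have hCB : C B⁻¹ * C B = 1 := by rw [← C_mul, inv_mul_cancel₀ hB, C_1]
  linear_combination hCB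

theorem isRoot_bluherPoly_iff {σ : F →+* F} (hσ : ∀ x, σ x = x ^ q) {y : F} :
    (bluherPoly q B).IsRoot y ↔ σ y * y = B * (y - 1) := by
  simp only [bluherPoly, IsRoot, eval_add, eval_sub, eval_mul, eval_pow, eval_C, eval_X, hσ]
  constructor <;> intro h <;> linear_combination h

theorem pow_sq_eq_map_map {σ : F →+* F} (hσ : ∀ x, σ x = x ^ q) (u : F) :
    u ^ (q ^ 2) = σ (σ u) := by
  rw [hσ, hσ, ← pow_mul, sq]

theorem div_eq_bluherValue {σ : F →+* F} (hσ : ∀ x, σ x = x ^ q) (u : F) :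
    (u - u ^ (q ^ 2)) ^ (q + 1) / (u - u ^ q) ^ (q ^ 2 + 1) = bluherValue σ (σ u - u) := by
  have hnum : u - σ (σ u) = -(σ u - u + σ (σ u - u)) := by rw [map_sub]; ring
  have hden : u - σ u = -(σ u - u) := by ring
  rw [pow_succ _ q, pow_succ _ (q ^ 2), pow_sq_eq_map_map hσ, ← hσ, pow_sq_eq_map_map hσ, ← hσ,
    hnum, hden, bluherValue, map_neg, map_neg, map_neg, neg_mul_neg, neg_mul_neg]

theorem exists_eq_bluherValue_of_splits {σ : F →+* F} (hσ : ∀ x, σ x = x ^ q) (hq : 2 ≤ q)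
    (hq0 : (q : F) = 0) (hB : B ≠ 0) (hs : (bluherPoly q B).Splits) :
    ∃ u, σ (σ u) ≠ u ∧ B = bluherValue σ (σ u - u) := by
  classical
  have hcard : (bluherPoly q B).roots.toFinset.card = q + 1 := by
    rw [Multiset.toFinset_card_of_nodup (nodup_roots (separable_bluherPoly hq0 hB)),
      splits_iff_card_roots.mp hs, natDegree_bluherPoly (by omega)]
  obtain ⟨x, hx, y, hy, z, hz, hxy, hxz, hyz⟩ :=
    Finset.two_lt_card.mp (by omega : 2 < (bluherPoly q B).roots.toFinset.card)
  have hsol : ∀ t ∈ (bluherPoly q B).roots.toFinset, σ t * t = B * (t - 1) := fun t ht =>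
    (isRoot_bluherPoly_iff hσ).mp (mem_roots'.mp (Multiset.mem_toFinset.mp ht)).2
  exact exists_eq_bluherValue_of_solutions hB hxy hxz hyz (hsol x hx) (hsol y hy) (hsol z hz)

theorem splits_bluherPoly_bluherValue {σ : F →+* F} (hσ : ∀ x, σ x = x ^ q) {K : Type*}
    [Finite K] (hK : Nat.card K = q) {φ : K → F} (hφ : Injective φ)
    (hfix : ∀ c, σ (φ c) = φ c) {u : F} (hu : σ (σ u) ≠ u) :
    (bluherPoly q (bluherValue σ (σ u - u))).Splits := by
  have hu' := map_ne_of_map_map_ne hu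
  have ha : σ u - u ≠ 0 := sub_ne_zero.mpr hu'
  refine splits_of_natDegree_le_card (bluherPoly_ne_zero (bluherValue_sub_ne_zero hu))
    (injective_bluherRoot_lineRep hu hφ hfix) (fun i => (isRoot_bluherPoly_iff hσ).mpr
      (map_bluherRoot_mul_self ha (lineRep_ne_zero hu' hfix i) (lineRep_linearized_eq hfix i))) ?_
  rw [Finite.card_option, hK]
  exact natDegree_bluherPoly_le

end BluherPolynomial

theorem GaloisField.pow_eq_self {p m : ℕ} [Fact p.Prime] (hm : m ≠ 0) (c : GaloisField p m) :
    c ^ p ^ m = c := by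
  have := Fintype.ofFinite (GaloisField p m)
  have h := FiniteField.pow_card c
  rwa [Fintype.card_eq_nat_card, GaloisField.card p m hm] at h

theorem nonempty_galoisField_ringHom {p m k : ℕ} [Fact p.Prime] (hm : m ≠ 0) {F : Type*}
    [Field F] [Fintype F] [CharP F p] (hF : Fintype.card F = (p ^ m) ^ k) :
    Nonempty (GaloisField p m →+* F) := by
  let := ZMod.algebra F p
  have hrank : Module.finrank (ZMod p) F = m * k := Nat.pow_right_injective
    (Fact.out : p.Prime).two_le (by dsimp only; rw [FiniteField.pow_finrank_eq_card, hF, pow_mul])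
  obtain ⟨φ⟩ := FiniteField.nonempty_algHom_of_finrank_dvd (F := ZMod p) (K := GaloisField p m)
    (L := F) (by rw [hrank, GaloisField.finrank p hm]; exact dvd_mul_right m k)
  exact ⟨φ.toRingHom⟩

theorem bluher_values_characterisation_general (p m q k : ℕ) (hp : p.Prime) (hm : 0 < m)
    (hq : q = p ^ m)
    (F : Type*) [Field F] [Fintype F] (hF : Fintype.card F = q ^ k) :
    {B : F | B ≠ 0 ∧
        ((X ^ (q + 1) - C B * X + C B : Polynomial F).map (RingHom.id F)).Splits} =
      {B : F | ∃ u : F, u ^ (q ^ 2) ≠ u ∧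
        B = (u - u ^ (q ^ 2)) ^ (q + 1) / (u - u ^ q) ^ (q ^ 2 + 1)} := by
  have := Fact.mk hp
  have : CharP F p := charP_of_card_eq_prime_pow (hF.trans (by rw [hq, ← pow_mul]))
  have hσ : ∀ x : F, iterateFrobenius F p m x = x ^ q := fun x => by
    rw [hq, iterateFrobenius_def]
  ext B
  simp_rw [Set.mem_ofPred_eq, Polynomial.map_id, div_eq_bluherValue hσ, pow_sq_eq_map_map hσ]
  constructor
  · rintro ⟨hB, hs⟩
    exact exists_eq_bluherValue_of_splits hσ (hq ▸ Nat.one_lt_pow hm.ne' hp.one_lt)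
      (by rw [hq, Nat.cast_pow, CharP.cast_eq_zero, zero_pow hm.ne']) hB hs
  · rintro ⟨u, hu, rfl⟩
    obtain ⟨φ⟩ := nonempty_galoisField_ringHom hm.ne' (hq ▸ hF)
    refine ⟨bluherValue_sub_ne_zero hu, splits_bluherPoly_bluherValue hσ
      (hq ▸ GaloisField.card p m hm.ne') φ.injective (fun c => ?_) hu⟩
    rw [hσ, ← map_pow, hq, GaloisField.pow_eq_self hm.ne']

/-- **Helleseth–Kholosha characterisation of Bluher values** (Theorem 2 of the paper).
Let `q = p^m` be a prime power and `k ≥ 3`, and let `F` be the field with `q^k` elements.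
The set of Bluher values, i.e. of `B ≠ 0` such that `X^(q+1) - B·X + B` splits completely
over `F`, equals `{ (u - u^(q^2))^(q+1) / (u - u^q)^(q^2+1) | u ∈ F, u ∉ F_{q^2} }`,
where `u ∉ F_{q^2}` is expressed as `u^(q^2) ≠ u`. -/
theorem bluher_values_characterisation (p m q k : ℕ) (hp : p.Prime) (hm : 0 < m)
    (hq : q = p ^ m) (hk : 3 ≤ k)
    (F : Type*) [Field F] [Fintype F] (hF : Fintype.card F = q ^ k) :
    {B : F | B ≠ 0 ∧
        ((X ^ (q + 1) - C B * X + C B : Polynomial F).map (RingHom.id F)).Splits} =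
      {B : F | ∃ u : F, u ^ (q ^ 2) ≠ u ∧
        B = (u - u ^ (q ^ 2)) ^ (q + 1) / (u - u ^ q) ^ (q ^ 2 + 1)} :=
  bluher_values_characterisation_general p m q k hp hm hq F hF
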